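/- Let a_1, b_1, c_1, f_1 ∈ ℂ with a_1 ≠ b_1, a_1 + b_1 ≠ 0 and c_1 + f_1 ≠ 0. Then there exist a constant C > 0, an integer N₀ ≥ 1, and complex numbers ρ_N for N ≥ N₀ such that: (i) for every N ≥ N₀ the boundary value problem −y″ = ρ_N²·y on [0,1], y(0) = y(1), a_1·y′(0) + b_1·y′(1) + c_1·y(0) + f_1·y(1) = 0 has a twice continuously differentiable solution y not identically zero on [0,1]; and (ii) for every N ≥ N₀, | ρ_N − 2πN − (c_1 + f_1)/(πN(b_1 − a_1)) | ≤ C/N³. -/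

import Mathlib

open Complex NNReal

lemma norm_ccos_le_three {z : ℂ} (hz : ‖z‖ ≤ 1) : ‖Complex.cos z‖ ≤ 3 := by
  have h1 : ‖Complex.exp (z * I)‖ ≤ Real.exp 1 := by
    rw [Complex.norm_exp]
    apply Real.exp_le_exp.2
    have := abs_im_le_norm z
    simp only [mul_re, I_re, I_im, mul_zero, mul_one, zero_sub]
    nlinarith [abs_le.1 this]
  have h2 : ‖Complex.exp (-z * I)‖ ≤ Real.exp 1 := by
    rw [Complex.norm_exp]
    apply Real.exp_le_exp.2
    have := abs_im_le_norm z
    simp only [neg_mul, neg_re, mul_re, I_re, I_im, mul_zero, mul_one, zero_sub, neg_neg]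
    nlinarith [abs_le.1 this]
  have he : Real.exp 1 ≤ 2.7182818286 := Real.exp_one_lt_d9.le
  calc ‖Complex.cos z‖ = ‖Complex.exp (z * I) + Complex.exp (-z * I)‖ / 2 := by
        rw [Complex.cos]; rw [norm_div]; norm_num
    _ ≤ (Real.exp 1 + Real.exp 1) / 2 := by
        gcongr; exact (norm_add_le _ _).trans (by gcongr)
    _ ≤ 3 := by nlinarith

lemma norm_csin_le_three {z : ℂ} (hz : ‖z‖ ≤ 1) : ‖Complex.sin z‖ ≤ 3 := by
  have h1 : ‖Complex.exp (z * I)‖ ≤ Real.exp 1 := by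
    rw [Complex.norm_exp]
    apply Real.exp_le_exp.2
    have := abs_im_le_norm z
    simp only [mul_re, I_re, I_im, mul_zero, mul_one, zero_sub]
    nlinarith [abs_le.1 this]
  have h2 : ‖Complex.exp (-z * I)‖ ≤ Real.exp 1 := by
    rw [Complex.norm_exp]
    apply Real.exp_le_exp.2
    have := abs_im_le_norm z
    simp only [neg_mul, neg_re, mul_re, I_re, I_im, mul_zero, mul_one, zero_sub, neg_neg]
    nlinarith [abs_le.1 this]
  have he : Real.exp 1 ≤ 2.7182818286 := Real.exp_one_lt_d9.le
  calc ‖Complex.sin z‖ = ‖Complex.exp (-z * I) - Complex.exp (z * I)‖ * ‖I‖ / 2 := by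
        rw [Complex.sin, norm_div, norm_mul]; norm_num
    _ ≤ (Real.exp 1 + Real.exp 1) * 1 / 2 := by
        gcongr
        · exact (norm_sub_le _ _).trans (by gcongr)
        · simp
    _ ≤ 3 := by nlinarith

lemma norm_csin_le {z : ℂ} (hz : ‖z‖ ≤ 1) : ‖Complex.sin z‖ ≤ 3 * ‖z‖ := by
  have := Convex.norm_image_sub_le_of_norm_hasDerivWithin_le
    (f := Complex.sin) (f' := Complex.cos) (s := Metric.closedBall (0:ℂ) 1)
    (fun x _ => (Complex.hasDerivAt_sin x).hasDerivWithinAt)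
    (fun x hx => norm_ccos_le_three (by simpa [Metric.mem_closedBall, dist_zero_right] using hx))
    (convex_closedBall _ _) (Metric.mem_closedBall_self one_pos.le)
    (by simpa [Metric.mem_closedBall, dist_zero_right] using hz)
  simpa using this

lemma norm_one_sub_ccos_le {z : ℂ} (hz : ‖z‖ ≤ 1) : ‖1 - Complex.cos z‖ ≤ 3 * ‖z‖ ^ 2 := by
  have := Convex.norm_image_sub_le_of_norm_hasDerivWithin_le
    (f := Complex.cos) (f' := fun x => -Complex.sin x) (s := Metric.closedBall (0:ℂ) ‖z‖)
    (fun x _ => (Complex.hasDerivAt_cos x).hasDerivWithinAt)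
    (fun x hx => by
      have hx' : ‖x‖ ≤ ‖z‖ := by simpa [Metric.mem_closedBall, dist_zero_right] using hx
      calc ‖-Complex.sin x‖ = ‖Complex.sin x‖ := norm_neg _
        _ ≤ 3 * ‖x‖ := norm_csin_le (hx'.trans hz)
        _ ≤ 3 * ‖z‖ := by gcongr)
    (convex_closedBall _ _) (Metric.mem_closedBall_self (norm_nonneg _))
    (Metric.mem_closedBall.2 (by rw [dist_zero_right]))
  rw [Complex.cos_zero] at this
  calc ‖1 - Complex.cos z‖ = ‖Complex.cos z - 1‖ := by rw [norm_sub_rev]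
    _ ≤ 3 * ‖z‖ * ‖z - 0‖ := this
    _ = 3 * ‖z‖ ^ 2 := by rw [sub_zero]; ring

lemma csin_nat_pi_add (N : ℕ) (z : ℂ) :
    Complex.sin ((N : ℂ) * (Real.pi : ℂ) + z) = (-1) ^ N * Complex.sin z := by
  induction N with
  | zero => simp
  | succ n ih =>
    have h : ((n + 1 : ℕ) : ℂ) * (Real.pi : ℂ) + z = ((n : ℂ) * (Real.pi : ℂ) + z) + Real.pi := by
      push_cast; ring
    rw [h, Complex.sin_add_pi, ih]; ring

lemma ccos_nat_pi_add (N : ℕ) (z : ℂ) :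
    Complex.cos ((N : ℂ) * (Real.pi : ℂ) + z) = (-1) ^ N * Complex.cos z := by
  induction N with
  | zero => simp
  | succ n ih =>
    have h : ((n + 1 : ℕ) : ℂ) * (Real.pi : ℂ) + z = ((n : ℂ) * (Real.pi : ℂ) + z) + Real.pi := by
      push_cast; ring
    rw [h, Complex.cos_add_pi, ih]; ring


set_option maxHeartbeats 1000000 in
lemma key_root (A B : ℂ) (hA : A ≠ 0) :
    ∃ C : ℝ, 0 < C ∧ ∃ N₀ : ℕ, 1 ≤ N₀ ∧ ∀ N : ℕ, N₀ ≤ N → ∃ w : ℂ,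
      A * (2 * (Real.pi : ℂ) * N + w) * Complex.sin (w / 2)
        + B * Complex.cos (w / 2) = 0 ∧
      ‖w - (-B / (A * (Real.pi : ℂ) * N))‖ ≤ C / (N : ℝ) ^ 3 := by
  have hπ : (0:ℝ) < Real.pi := Real.pi_pos
  have hα : (0:ℝ) < ‖A‖ := norm_pos_iff.2 hA
  set α : ℝ := ‖A‖ with hαdef
  set β : ℝ := ‖B‖ with hβdef
  have hβ0 : 0 ≤ β := norm_nonneg _
  set r₀ : ℝ := β / (α * Real.pi) + 1 with hr₀def
  have hr₀1 : 1 ≤ r₀ := le_add_of_nonneg_left (by positivity)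
  set K₁ : ℝ := r₀ * (3*α + 3*β/4 + 3/4*α*Real.pi*r₀) with hK₁def
  have hK₁ : 0 < K₁ := by positivity
  set K : ℝ := K₁ / (α * Real.pi) with hKdef
  have hK : 0 < K := by positivity
  refine ⟨K * r₀ + 1, by positivity, ⌈r₀ + 2*K + K*r₀⌉₊ + 1,
    Nat.succ_le_succ (Nat.zero_le _), fun N hN => ?_⟩
  -- numeric facts about n
  have hN1 : 1 ≤ N := le_trans (Nat.succ_le_succ (Nat.zero_le _)) hN
  set n : ℝ := (N : ℝ) with hndef
  have hn1 : 1 ≤ n := by rw [hndef]; exact_mod_cast hN1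
  have hn0 : 0 < n := lt_of_lt_of_le one_pos hn1
  have hceil : r₀ + 2*K + K*r₀ ≤ n := by
    calc r₀ + 2*K + K*r₀ ≤ (⌈r₀ + 2*K + K*r₀⌉₊ : ℝ) := Nat.le_ceil _
      _ ≤ n := by rw [hndef]; exact_mod_cast le_trans (Nat.le_succ _) hN
  have h_r₀n : r₀ ≤ n := by nlinarith
  have h_2K : 2*K ≤ n^2 := by nlinarith
  have h_Kr₀ : K*r₀ ≤ n^2 := by nlinarith
  -- the setup
  set c : ℂ := 2 * (Real.pi : ℂ) * N with hcdef
  set D : ℂ := A * (Real.pi : ℂ) * N with hDdef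
  have hD : D ≠ 0 := by
    refine mul_ne_zero (mul_ne_zero hA ?_) ?_
    · exact_mod_cast Complex.ofReal_ne_zero.2 hπ.ne'
    · exact_mod_cast Nat.cast_ne_zero.2 (by omega)
  have hDnorm : ‖D‖ = α * Real.pi * n := by
    rw [hDdef, norm_mul, norm_mul, Complex.norm_real, Real.norm_eq_abs, abs_of_pos hπ,
      Complex.norm_natCast]
  set g : ℂ → ℂ := fun w => A * (c + w) * Complex.sin (w/2) + B * Complex.cos (w/2) with hgdef
  set g' : ℂ → ℂ := fun w => A * Complex.sin (w/2) + A*(c+w) * (Complex.cos (w/2) * 2⁻¹)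
    + B * (-Complex.sin (w/2) * 2⁻¹) with hg'def
  set T : ℂ → ℂ := fun w => w - g w / D with hTdef
  have hg' : ∀ w, HasDerivAt g (g' w) w := by
    intro w
    have h2 : HasDerivAt (fun w : ℂ => w / 2) 2⁻¹ w := by
      simpa [one_div] using (hasDerivAt_id w).div_const 2
    have hsin : HasDerivAt (fun w : ℂ => Complex.sin (w/2)) (Complex.cos (w/2) * 2⁻¹) w :=
      (Complex.hasDerivAt_sin _).comp w h2
    have hcos : HasDerivAt (fun w : ℂ => Complex.cos (w/2)) (-Complex.sin (w/2) * 2⁻¹) w :=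
      (Complex.hasDerivAt_cos _).comp w h2
    have hlin : HasDerivAt (fun w : ℂ => A * (c + w)) A w := by
      simpa using ((hasDerivAt_id w).const_add c).const_mul A
    exact (hlin.mul hsin).add (hcos.const_mul B)
  have hT' : ∀ w, HasDerivAt T (1 - g' w / D) w := fun w => by
    exact (hasDerivAt_id w).sub ((hg' w).div_const D)
  set r : ℝ := r₀ / n with hrdef
  have hr_pos : 0 < r := by positivity
  have hr1 : r ≤ 1 := by rw [hrdef, div_le_one hn0]; exact h_r₀n
  set s : Set ℂ := Metric.closedBall 0 r with hsdef
  have h0s : (0:ℂ) ∈ s := Metric.mem_closedBall_self hr_pos.le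
  set kR : ℝ := K / n^2 with hkRdef
  have h2norm : ‖(2:ℂ)‖ = 2 := by norm_num
  have hkR0 : 0 < kR := by positivity
  -- derivative bound
  have hbound : ∀ w ∈ s, ‖1 - g' w / D‖ ≤ kR := by
    intro w hw
    have hwr : ‖w‖ ≤ r := by simpa [hsdef, Metric.mem_closedBall, dist_zero_right] using hw
    have hw1 : ‖w‖ ≤ 1 := hwr.trans hr1
    have hw0 : 0 ≤ ‖w‖ := norm_nonneg _
    have hw2 : ‖w/2‖ ≤ 1 := by
      rw [norm_div, h2norm]; linarith
    have hw2' : ‖w/2‖ = ‖w‖/2 := by rw [norm_div, h2norm]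
    have htn : ‖w‖ * n ≤ r₀ := by
      rw [hrdef] at hwr
      calc ‖w‖ * n ≤ (r₀/n) * n := by gcongr
        _ = r₀ := by field_simp
    have hid : D - g' w = (B/2 - A) * Complex.sin (w/2)
        + A*((Real.pi:ℂ)*N)*(1 - Complex.cos (w/2)) - A*w/2 * Complex.cos (w/2) := by
      rw [hg'def, hDdef, hcdef]; ring
    have hnum : ‖D - g' w‖ ≤ K₁ / n := by
      rw [hid]
      have e1 : ‖(B/2 - A) * Complex.sin (w/2)‖ ≤ (β/2 + α) * (3 * (‖w‖/2)) := by
        rw [norm_mul]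
        gcongr
        · calc ‖B/2 - A‖ ≤ ‖B/2‖ + ‖A‖ := norm_sub_le _ _
            _ = β/2 + α := by rw [norm_div, h2norm]
        · calc ‖Complex.sin (w/2)‖ ≤ 3 * ‖w/2‖ := norm_csin_le hw2
            _ = 3 * (‖w‖/2) := by rw [hw2']
      have e2 : ‖A*((Real.pi:ℂ)*N)*(1 - Complex.cos (w/2))‖ ≤ α * (Real.pi * n) * (3 * (‖w‖/2)^2) := by
        rw [norm_mul, norm_mul, norm_mul, Complex.norm_real, Real.norm_eq_abs, abs_of_pos hπ,
          Complex.norm_natCast, ← mul_assoc]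
        gcongr
        calc ‖1 - Complex.cos (w/2)‖ ≤ 3 * ‖w/2‖^2 := norm_one_sub_ccos_le hw2
          _ = 3 * (‖w‖/2)^2 := by rw [hw2']
      have e3 : ‖A*w/2 * Complex.cos (w/2)‖ ≤ α * ‖w‖ / 2 * 3 := by
        rw [norm_mul, norm_div, norm_mul, h2norm]
        gcongr
        exact norm_ccos_le_three hw2
      have e4 : ‖(B/2 - A) * Complex.sin (w/2) + A*((Real.pi:ℂ)*N)*(1 - Complex.cos (w/2))
          - A*w/2 * Complex.cos (w/2)‖
          ≤ (β/2 + α) * (3 * (‖w‖/2)) + α * (Real.pi * n) * (3 * (‖w‖/2)^2) + α * ‖w‖ / 2 * 3 := by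
        refine le_trans (norm_sub_le _ _) ?_
        refine le_trans (add_le_add (norm_add_le _ _) le_rfl) ?_
        linarith [e1, e2, e3]
      refine e4.trans ?_
      have e5 : α * (Real.pi * n) * (3 * (‖w‖/2)^2) ≤ 3/4*α*Real.pi*r₀ * ‖w‖ := by
        nlinarith [mul_le_mul_of_nonneg_left htn
          (show (0:ℝ) ≤ 3/4*α*Real.pi*‖w‖ by positivity)]
      have e6 : (β/2 + α) * (3 * (‖w‖/2)) + 3/4*α*Real.pi*r₀*‖w‖ + α * ‖w‖ / 2 * 3
          = (3*α + 3*β/4 + 3/4*α*Real.pi*r₀) * ‖w‖ := by ring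
      have e7 : (3*α + 3*β/4 + 3/4*α*Real.pi*r₀) * ‖w‖ ≤ K₁ / n := by
        have hpos : (0:ℝ) ≤ 3*α + 3*β/4 + 3/4*α*Real.pi*r₀ := by positivity
        have hwr' : ‖w‖ ≤ r₀ / n := by rw [hrdef] at hwr; exact hwr
        calc (3*α + 3*β/4 + 3/4*α*Real.pi*r₀) * ‖w‖
            ≤ (3*α + 3*β/4 + 3/4*α*Real.pi*r₀) * (r₀/n) := by gcongr
          _ = K₁ / n := by rw [hK₁def]; ring
      linarith
    have hrewr : (1:ℂ) - g' w / D = (D - g' w) / D := by field_simp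
    rw [hrewr, norm_div, hDnorm]
    calc ‖D - g' w‖ / (α * Real.pi * n) ≤ (K₁/n) / (α * Real.pi * n) := by gcongr
      _ = kR := by rw [hkRdef, hKdef, div_div, div_div]; congr 1; ring
  -- Lipschitz estimate
  have hlip : ∀ x ∈ s, ∀ y ∈ s, ‖T x - T y‖ ≤ kR * ‖x - y‖ := fun x hx y hy =>
    Convex.norm_image_sub_le_of_norm_hasDerivWithin_le
      (fun w _ => (hT' w).hasDerivWithinAt) hbound (convex_closedBall _ _) hy hx
  have hT0 : T 0 = -(B / D) := by
    simp [hTdef, hgdef]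
  have hT0norm : ‖T 0‖ = (r₀ - 1)/n := by
    have hr1' : r₀ - 1 = β/(α*Real.pi) := by rw [hr₀def]; ring
    rw [hT0, norm_neg, norm_div, hDnorm, hr1', div_div, ← hβdef]
  -- maps to
  have maps : Set.MapsTo T s s := by
    intro w hw
    have hwr : ‖w‖ ≤ r := by simpa [hsdef, Metric.mem_closedBall, dist_zero_right] using hw
    have h1 : ‖T w - T 0‖ ≤ kR * ‖w‖ := by simpa using hlip w hw 0 h0s
    have e1 : kR * ‖w‖ ≤ K*r₀/n^3 := by
      calc kR * ‖w‖ ≤ kR * r := by gcongr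
        _ = K*r₀/n^3 := by rw [hkRdef, hrdef]; field_simp
    have e2 : K*r₀/n^3 ≤ 1/n := by
      rw [div_le_div_iff₀ (by positivity) (by positivity)]
      nlinarith
    have : ‖T w‖ ≤ r := by
      calc ‖T w‖ = ‖(T w - T 0) + T 0‖ := by ring_nf
        _ ≤ ‖T w - T 0‖ + ‖T 0‖ := norm_add_le _ _
        _ ≤ 1/n + (r₀ - 1)/n := by rw [hT0norm]; linarith
        _ = r := by rw [hrdef]; field_simp; ring
    simpa [hsdef, Metric.mem_closedBall, dist_zero_right] using this
  -- contraction
  have hhalf : ((1/2 : ℝ≥0) : ℝ) = 1/2 := by norm_num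
  have hk_half : kR ≤ 1/2 := by
    rw [hkRdef, div_le_iff₀ (by positivity)]
    nlinarith
  have hlipOn : LipschitzOnWith (1/2 : ℝ≥0) T s := by
    apply LipschitzOnWith.of_dist_le_mul
    intro x hx y hy
    rw [dist_eq_norm, dist_eq_norm, hhalf]
    calc ‖T x - T y‖ ≤ kR * ‖x - y‖ := hlip x hx y hy
      _ ≤ 1/2 * ‖x - y‖ := by gcongr
  have hcontr : ContractingWith (1/2 : ℝ≥0) (maps.restrict T s s) :=
    ⟨by rw [← NNReal.coe_lt_coe]; push_cast; norm_num, hlipOn.to_restrict⟩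
  obtain ⟨w, hws, hfix, -, -⟩ := hcontr.exists_fixedPoint'
    Metric.isClosed_closedBall.isComplete maps h0s (edist_ne_top _ _)
  have hfe : T w = w := hfix
  have hgw : g w = 0 := by
    have h1 : g w / D = 0 := sub_eq_self.mp hfe
    exact (div_eq_zero_iff.mp h1).resolve_right hD
  have hwr : ‖w‖ ≤ r := by simpa [hsdef, Metric.mem_closedBall, dist_zero_right] using hws
  refine ⟨w, ?_, ?_⟩
  · simpa [hgdef, hcdef] using hgw
  · have h1 : ‖w - T 0‖ ≤ kR * ‖w‖ := by
      have := hlip w hws 0 h0s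
      rw [hfe] at this
      simpa using this
    have h2 : w - (-B / (A * (Real.pi : ℂ) * N)) = w - T 0 := by
      rw [hT0, hDdef, neg_div]
    rw [h2]
    have e1 : kR * ‖w‖ ≤ K*r₀/n^3 := by
      calc kR * ‖w‖ ≤ kR * r := by gcongr
        _ = K*r₀/n^3 := by rw [hkRdef, hrdef]; field_simp
    have e2 : K*r₀/n^3 ≤ (K*r₀+1)/n^3 := by gcongr; linarith
    calc ‖w - T 0‖ ≤ kR * ‖w‖ := h1
      _ ≤ (K*r₀+1)/(n:ℝ)^3 := by linarith


set_option maxHeartbeats 400000 in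
/-- Appendix, part 3.1: asymptotics of the second family of square roots of
eigenvalues for the boundary conditions `y(0) = y(1)`,
`a₁y′(0) + b₁y′(1) + c₁y(0) + f₁y(1) = 0` (with `a₁ ≠ b₁`, `a₁ + b₁ ≠ 0`,
`c₁ + f₁ ≠ 0`): `ρ_N = 2πN + (c₁ + f₁)/(πN(b₁ − a₁)) + O(N⁻³)`. -/
theorem eigenvalue_asymptotics_close_pair (a1 b1 c1 f1 : ℂ)
    (hab : a1 ≠ b1) (hab' : a1 + b1 ≠ 0) (hcf : c1 + f1 ≠ 0) :
    ∃ C : ℝ, 0 < C ∧ ∃ N₀ : ℕ, 1 ≤ N₀ ∧ ∃ ρ : ℕ → ℂ,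
      ∀ N : ℕ, N₀ ≤ N →
        (∃ y : ℝ → ℂ, ContDiff ℝ 2 y ∧ (∃ x ∈ Set.Icc (0:ℝ) 1, y x ≠ 0) ∧
          (∀ x ∈ Set.Icc (0:ℝ) 1, -(deriv (deriv y) x) = (ρ N) ^ 2 * y x) ∧
          y 0 = y 1 ∧
          a1 * deriv y 0 + b1 * deriv y 1 + c1 * y 0 + f1 * y 1 = 0) ∧
        ‖ρ N - 2 * (Real.pi : ℂ) * N
            - (c1 + f1) / ((Real.pi : ℂ) * N * (b1 - a1))‖
          ≤ C / (N : ℝ) ^ 3 := by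
  have hA : a1 - b1 ≠ 0 := sub_ne_zero.mpr hab
  obtain ⟨C, hC, N₀, hN₀, hkey⟩ := key_root (a1 - b1) (c1 + f1) hA
  have hch : ∀ N : ℕ, ∃ w : ℂ, N₀ ≤ N →
      ((a1 - b1) * (2 * (Real.pi : ℂ) * N + w) * Complex.sin (w / 2)
        + (c1 + f1) * Complex.cos (w / 2) = 0 ∧
      ‖w - (-(c1 + f1) / ((a1 - b1) * (Real.pi : ℂ) * N))‖ ≤ C / (N : ℝ) ^ 3) := by
    intro N
    by_cases h : N₀ ≤ N
    · exact (hkey N h).imp fun w hw => fun _ => hw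
    · exact ⟨0, fun h' => absurd h' h⟩
  choose w hw using hch
  refine ⟨C, hC, N₀, hN₀, fun N => 2 * (Real.pi : ℂ) * N + w N, fun N hN => ?_⟩
  obtain ⟨heq, hbd⟩ := hw N hN
  have hN1 : 1 ≤ N := le_trans hN₀ hN
  set ρN : ℂ := 2 * (Real.pi : ℂ) * N + w N with hρdef
  constructor
  · -- boundary value problem
    set y : ℝ → ℂ := fun x : ℝ => Complex.cos (ρN * x - ρN / 2) with hydef
    -- derivatives
    have hd1 : ∀ x : ℝ, HasDerivAt y (-Complex.sin (ρN * x - ρN / 2) * ρN) x := by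
      intro x
      have h1 : HasDerivAt (fun z : ℂ => Complex.cos (ρN * z - ρN / 2))
          (-Complex.sin (ρN * (x:ℂ) - ρN / 2) * ρN) (x:ℂ) := by
        have h2 : HasDerivAt (fun z : ℂ => ρN * z - ρN / 2) ρN (x:ℂ) := by
          simpa using ((hasDerivAt_id ((x:ℂ))).const_mul ρN).sub_const (ρN/2)
        exact (Complex.hasDerivAt_cos (ρN * (x:ℂ) - ρN / 2)).comp (x:ℂ) h2
      exact h1.comp_ofReal
    have hderiv1 : deriv y = fun x : ℝ => -Complex.sin (ρN * x - ρN / 2) * ρN :=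
      funext fun x => (hd1 x).deriv
    have hd2 : ∀ x : ℝ, HasDerivAt (fun t : ℝ => -Complex.sin (ρN * t - ρN / 2) * ρN)
        (-Complex.cos (ρN * x - ρN / 2) * ρN * ρN) x := by
      intro x
      have h1 : HasDerivAt (fun z : ℂ => -Complex.sin (ρN * z - ρN / 2) * ρN)
          (-Complex.cos (ρN * (x:ℂ) - ρN / 2) * ρN * ρN) (x:ℂ) := by
        have h2 : HasDerivAt (fun z : ℂ => ρN * z - ρN / 2) ρN (x:ℂ) := by
          simpa using ((hasDerivAt_id ((x:ℂ))).const_mul ρN).sub_const (ρN/2)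
        have h3 := ((Complex.hasDerivAt_sin (ρN * (x:ℂ) - ρN / 2)).comp (x:ℂ) h2).neg.mul_const ρN
        exact h3.congr_deriv (by ring)
      exact h1.comp_ofReal
    -- sin/cos identities at the endpoints
    have harg0 : ρN * ((0:ℝ):ℂ) - ρN / 2 = -(ρN / 2) := by push_cast; ring
    have harg1 : ρN * ((1:ℝ):ℂ) - ρN / 2 = ρN / 2 := by push_cast; ring
    have hhalf : ρN / 2 = (N : ℂ) * (Real.pi : ℂ) + w N / 2 := by rw [hρdef]; ring
    have hs2 : Complex.sin (ρN / 2) = (-1) ^ N * Complex.sin (w N / 2) := by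
      rw [hhalf, csin_nat_pi_add]
    have hc2 : Complex.cos (ρN / 2) = (-1) ^ N * Complex.cos (w N / 2) := by
      rw [hhalf, ccos_nat_pi_add]
    have hy0 : y 0 = (-1) ^ N * Complex.cos (w N / 2) := by
      rw [hydef]; simp only; rw [harg0, Complex.cos_neg, hc2]
    have hy1 : y 1 = (-1) ^ N * Complex.cos (w N / 2) := by
      rw [hydef]; simp only; rw [harg1, hc2]
    have hdy0 : deriv y 0 = (-1) ^ N * Complex.sin (w N / 2) * ρN := by
      rw [hderiv1]; simp only; rw [harg0, Complex.sin_neg, hs2]; ring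
    have hdy1 : deriv y 1 = -((-1) ^ N * Complex.sin (w N / 2)) * ρN := by
      rw [hderiv1]; simp only; rw [harg1, hs2]
    refine ⟨y, ?_, ⟨1/2, by norm_num, ?_⟩, ?_, ?_, ?_⟩
    · -- smoothness
      have h1 : ContDiff ℝ 2 (fun x : ℝ => ((x:ℂ))) := Complex.ofRealCLM.contDiff
      have h2 : ContDiff ℝ 2 (fun z : ℂ => Complex.cos z) :=
        (Complex.contDiff_cos.restrict_scalars ℝ).of_le le_top
      exact h2.comp ((contDiff_const.mul h1).sub contDiff_const)
    · -- y (1/2) ≠ 0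
      rw [hydef]; simp only
      have : ρN * (((1:ℝ)/2 : ℝ):ℂ) - ρN / 2 = 0 := by push_cast; ring
      rw [this, Complex.cos_zero]
      exact one_ne_zero
    · -- the ODE
      intro x _
      have : deriv (deriv y) x = -Complex.cos (ρN * x - ρN / 2) * ρN * ρN := by
        rw [hderiv1]; exact (hd2 x).deriv
      rw [this, hydef]; simp only; ring
    · rw [hy0, hy1]
    · rw [hy0, hy1, hdy0, hdy1]
      have heq' : (a1 - b1) * (2 * (Real.pi : ℂ) * N + w N) * Complex.sin (w N / 2)
          + (c1 + f1) * Complex.cos (w N / 2) = 0 := heq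
      have hρ : ρN = 2 * (Real.pi : ℂ) * N + w N := hρdef
      rw [hρ]
      linear_combination ((-1:ℂ)) ^ N * heq'
  · -- the asymptotic estimate
    have hπ : (Real.pi : ℂ) ≠ 0 := Complex.ofReal_ne_zero.2 Real.pi_pos.ne'
    have hNne : (N : ℂ) ≠ 0 := Nat.cast_ne_zero.2 (by omega)
    have hba : b1 - a1 ≠ 0 := sub_ne_zero.mpr (Ne.symm hab)
    have harg : ρN - 2 * (Real.pi : ℂ) * N - (c1 + f1) / ((Real.pi : ℂ) * N * (b1 - a1))
        = w N - (-(c1 + f1) / ((a1 - b1) * (Real.pi : ℂ) * N)) := by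
      rw [hρdef]
      field_simp
      ring
    rw [harg]
    exact hbd
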